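/- Let A ∈ M_n(ℂ). Then every X ∈ M_n(ℂ) satisfying Xᵀ A X = A is invertible (i.e. Sol_A is a group) if and only if ker(A) ∩ ker(Aᵀ) is trivial, i.e. the only vector v ∈ ℂⁿ with A v = 0 and Aᵀ v = 0 is v = 0. -/
import Mathlib


open Matrix

/-- For `A ∈ M_n(ℂ)`, `Sol_A` is a group (every solution of `Xᵀ A X = A` is
invertible) iff `ker(A) ∩ ker(Aᵀ)` is trivial. -/
theorem stmt_4 (n : ℕ) (A : Matrix (Fin n) (Fin n) ℂ) :
    (∀ X : Matrix (Fin n) (Fin n) ℂ, Xᵀ * A * X = A → IsUnit X) ↔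
      (∀ v : Fin n → ℂ, A.mulVec v = 0 → Aᵀ.mulVec v = 0 → v = 0) := by
  constructor
  · intro h v hv hvt
    by_contra hv0
    obtain ⟨i, hi⟩ := Function.ne_iff.mp hv0
    simp only [Pi.zero_apply] at hi
    set w : Fin n → ℂ := fun j => if j = i then (v i)⁻¹ else 0 with hw
    set X : Matrix (Fin n) (Fin n) ℂ := 1 - vecMulVec v w with hX
    have hAvw : A * vecMulVec v w = 0 := by
      ext a b
      have h0 : ∑ x, A a x * v x = 0 := by
        have := congrFun hv a
        simpa [mulVec, dotProduct] using this
      simp only [Matrix.mul_apply, vecMulVec, Matrix.of_apply, Matrix.zero_apply]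
      simp_rw [← mul_assoc, ← Finset.sum_mul, h0, zero_mul]
    have hwvA : vecMulVec w v * A = 0 := by
      ext a b
      have h0 : ∑ x, v x * A x b = 0 := by
        have := congrFun hvt b
        simp only [mulVec, dotProduct, transpose_apply, Pi.zero_apply] at this
        rw [← this]; exact Finset.sum_congr rfl fun x _ => mul_comm _ _
      simp only [Matrix.mul_apply, vecMulVec, Matrix.of_apply, Matrix.zero_apply]
      simp_rw [mul_assoc, ← Finset.mul_sum, h0, mul_zero]
    have hXT : Xᵀ = 1 - vecMulVec w v := by
      rw [hX, transpose_sub, transpose_one]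
      congr 1
      ext a b
      simp [vecMulVec, mul_comm]
    have hsol : Xᵀ * A * X = A := by
      rw [hXT, hX, sub_mul, one_mul, hwvA, sub_zero, mul_sub, mul_one, hAvw, sub_zero]
    have hXv : X.mulVec v = 0 := by
      ext a
      rw [hX, sub_mulVec, one_mulVec]
      simp only [Pi.sub_apply, Pi.zero_apply]
      have : (vecMulVec v w).mulVec v a = v a := by
        simp only [mulVec, dotProduct, vecMulVec, Matrix.of_apply]
        rw [Finset.sum_eq_single i (fun b _ hb => by simp [hw, hb]) (by simp)]
        simp only [hw, if_pos rfl]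
        rw [mul_assoc, inv_mul_cancel₀ hi, mul_one]
      rw [this, sub_self]
    have := h X hsol
    rw [Matrix.isUnit_iff_isUnit_det, isUnit_iff_ne_zero] at this
    exact this ((Matrix.exists_mulVec_eq_zero_iff).mp ⟨v, hv0, hXv⟩)
  · intro h X hX
    rw [Matrix.isUnit_iff_isUnit_det, isUnit_iff_ne_zero]
    intro hdet
    obtain ⟨v, hv0, hXv⟩ := (Matrix.exists_mulVec_eq_zero_iff).mpr hdet
    have hAv : A.mulVec v = 0 := by
      rw [← hX, ← Matrix.mulVec_mulVec, ← Matrix.mulVec_mulVec, hXv]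
      simp
    have hXT : Xᵀ * Aᵀ * X = Aᵀ := by
      have := congrArg Matrix.transpose hX
      simpa [Matrix.transpose_mul, mul_assoc] using this
    have hAtv : Aᵀ.mulVec v = 0 := by
      rw [← hXT, ← Matrix.mulVec_mulVec, ← Matrix.mulVec_mulVec, hXv]
      simp
    exact hv0 (h v hAv hAtv)
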